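/- Let N ≥ 1, let a, b, c, ρ ∈ ℝ, let L be an arbitrary real N × N matrix, and let k ∈ {1, 2, 3}. Consider the network vector field F on (ℝ³)^N of N Rössler systems coupled through the k-th variable into the k-th equation according to L, i.e. for each node i: ẋᵢ = −yᵢ − zᵢ + ρ·(L x)ᵢ if k = 1 (else ẋᵢ = −yᵢ − zᵢ), ẏᵢ = xᵢ + a·yᵢ + ρ·(L y)ᵢ if k = 2 (else ẏᵢ = xᵢ + a·yᵢ), żᵢ = b + zᵢ(xᵢ − c) + ρ·(L z)ᵢ if k = 3 (else żᵢ = b + zᵢ(xᵢ − c)). Let Φ : ℝ^{3N} → ℝ^{3N} be the observability map obtained by measuring y at every node, Φ = (yᵢ, L_F yᵢ, L_F² yᵢ)_{i=1,…,N}. Then Φ is a linear map and the absolute value of its determinant equals 1; in particular Φ is a bijection of ℝ^{3N}, so the network is fully observable from measuring the variable y at each node, independently of the coupling topology L, the coupling strength ρ, and the choice of coupled variable k. -/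

import Mathlib

/-- The `k`-th Lie derivative of a scalar function `h` along a vector field `F`. -/
noncomputable def lieD {E : Type*} [NormedAddCommGroup E] [NormedSpace ℝ E]
    (F : E → E) (k : ℕ) (h : E → ℝ) : E → ℝ :=
  match k with
  | 0 => h
  | k + 1 => fun p => fderiv ℝ (lieD F k h) p (F p)

/-- The observability determinant of a map `Φ` at a point `p`:
the determinant of the Jacobian (Fréchet derivative) of `Φ` at `p`. -/
noncomputable def obsDet {E : Type*} [NormedAddCommGroup E] [NormedSpace ℝ E]
    (Φ : E → E) (p : E) : ℝ :=
  LinearMap.det ((fderiv ℝ Φ p).toLinearMap)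

/-- Network of `N` Rössler systems where the `k`-th variable is coupled into the
`k`-th equation according to the matrix `L`, with coupling strength `ρ`.
State space `(ℝ³)^N`, node `i` has coordinates `(x_i, y_i, z_i) = (p i 0, p i 1, p i 2)`. -/
def netF {N : ℕ} (a b c ρ : ℝ) (L : Matrix (Fin N) (Fin N) ℝ) (k : Fin 3)
    (p : Fin N → Fin 3 → ℝ) : Fin N → Fin 3 → ℝ := fun i =>
  ![-p i 1 - p i 2 + (if k = 0 then ρ * ∑ j, L i j * p j 0 else 0),
    p i 0 + a * p i 1 + (if k = 1 then ρ * ∑ j, L i j * p j 1 else 0),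
    b + p i 2 * (p i 0 - c) + (if k = 2 then ρ * ∑ j, L i j * p j 2 else 0)]

/-- Observability map obtained by measuring `y` at every node:
`Φ = (y_i, L_F y_i, L_F² y_i)_{i = 1, …, N}`. -/
noncomputable def PhiNet {N : ℕ} (a b c ρ : ℝ) (L : Matrix (Fin N) (Fin N) ℝ) (k : Fin 3)
    (q : Fin N → Fin 3 → ℝ) : Fin N → Fin 3 → ℝ := fun i =>
  ![lieD (netF a b c ρ L k) 0 (fun r => r i 1) q,
    lieD (netF a b c ρ L k) 1 (fun r => r i 1) q,
    lieD (netF a b c ρ L k) 2 (fun r => r i 1) q]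

namespace NetObs

variable {N : ℕ}

abbrev E (N : ℕ) := Fin N → Fin 3 → ℝ

noncomputable def ev (i : Fin N) (l : Fin 3) : E N →L[ℝ] ℝ :=
  (ContinuousLinearMap.proj (R := ℝ) (φ := fun _ : Fin 3 => ℝ) l).comp
    (ContinuousLinearMap.proj (R := ℝ) (φ := fun _ : Fin N => Fin 3 → ℝ) i)

@[simp] lemma ev_apply (i : Fin N) (l : Fin 3) (q : E N) : ev i l q = q i l := rfl

variable (a ρ : ℝ) (L : Matrix (Fin N) (Fin N) ℝ) (k : Fin 3)

noncomputable def cpl (m : Fin 3) (i : Fin N) : E N →L[ℝ] ℝ :=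
  if k = m then ρ • ∑ j, L i j • ev j m else 0

lemma cpl_apply (m : Fin 3) (i : Fin N) (q : E N) :
    cpl ρ L k m i q = if k = m then ρ * ∑ j, L i j * q j m else 0 := by
  rw [cpl, apply_ite (fun (f : E N →L[ℝ] ℝ) => f q)]
  simp

noncomputable def g1 (i : Fin N) : E N →L[ℝ] ℝ := ev i 0 + a • ev i 1 + cpl ρ L k 1 i

noncomputable def g0 (i : Fin N) : E N →L[ℝ] ℝ := -(ev i 1) - ev i 2 + cpl ρ L k 0 i

noncomputable def g2 (i : Fin N) : E N →L[ℝ] ℝ :=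
  g0 ρ L k i + a • g1 a ρ L k i + (if k = 1 then ρ • ∑ j, L i j • g1 a ρ L k j else 0)

lemma g1_apply (b c : ℝ) (i : Fin N) (q : E N) :
    g1 a ρ L k i q = netF a b c ρ L k q i 1 := by
  simp [g1, cpl_apply, netF]

lemma g0_apply (b c : ℝ) (i : Fin N) (q : E N) :
    g0 ρ L k i q = netF a b c ρ L k q i 0 := by
  simp [g0, cpl_apply, netF]

lemma g2_apply (b c : ℝ) (i : Fin N) (q : E N) :
    g2 a ρ L k i q = g1 a ρ L k i (netF a b c ρ L k q) := by
  rw [g1_apply a ρ L k b c i (netF a b c ρ L k q), g2,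
    ContinuousLinearMap.add_apply, ContinuousLinearMap.add_apply,
    ContinuousLinearMap.smul_apply,
    apply_ite (fun (f : E N →L[ℝ] ℝ) => f q),
    g0_apply a ρ L k b c i q, g1_apply a ρ L k b c i q]
  have hrhs : netF a b c ρ L k (netF a b c ρ L k q) i 1 =
      netF a b c ρ L k q i 0 + a * netF a b c ρ L k q i 1 +
      (if k = 1 then ρ * ∑ j, L i j * netF a b c ρ L k q j 1 else 0) := by
    simp [netF]
  rw [hrhs]
  congr 1
  by_cases hk : k = 1
  · subst hk
    simp only [if_pos, ContinuousLinearMap.smul_apply, ContinuousLinearMap.sum_apply,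
      ContinuousLinearMap.smul_apply, smul_eq_mul]
    congr 1
    refine Finset.sum_congr rfl fun j _ => ?_
    congr 1
    exact g1_apply a ρ L 1 b c j q
  · simp [hk]

noncomputable def Tmap : E N →L[ℝ] E N :=
  ContinuousLinearMap.pi fun i =>
    ContinuousLinearMap.pi ![ev i 1, g1 a ρ L k i, g2 a ρ L k i]

lemma phi_eq (b c : ℝ) : PhiNet a b c ρ L k = ⇑(Tmap a ρ L k) := by
  have h1 : ∀ i : Fin N, lieD (netF a b c ρ L k) 1 (fun r => r i 1) = ⇑(g1 a ρ L k i) := by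
    intro i
    funext q
    show fderiv ℝ (fun r : E N => r i 1) q (netF a b c ρ L k q) = _
    have hev : (fun r : E N => r i 1) = ⇑(ev i 1) := rfl
    rw [hev, (ev i 1).fderiv, ev_apply, g1_apply a ρ L k b c i q]
  funext q i l
  simp only [PhiNet, Tmap, ContinuousLinearMap.pi_apply]
  fin_cases l
  · simp [lieD]
  · rw [h1 i]
    rfl
  · show fderiv ℝ (lieD (netF a b c ρ L k) 1 (fun r => r i 1)) q (netF a b c ρ L k q) = _
    rw [h1 i, (g1 a ρ L k i).fderiv]
    exact (g2_apply a ρ L k b c i q).symm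

/-- Currying linear equivalence. -/
noncomputable def curryE : ((Fin N × Fin 3) → ℝ) ≃ₗ[ℝ] E N where
  toFun u := fun i l => u (i, l)
  invFun q := fun p => q p.1 p.2
  map_add' _ _ := rfl
  map_smul' _ _ := rfl
  left_inv _ := rfl
  right_inv _ := rfl

noncomputable def Smap : ((Fin N × Fin 3) → ℝ) →ₗ[ℝ] ((Fin N × Fin 3) → ℝ) :=
  ((curryE.symm.toLinearMap.comp (Tmap a ρ L k).toLinearMap).comp curryE.toLinearMap)

lemma det_S : LinearMap.det (Smap a ρ L k) = LinearMap.det (Tmap a ρ L k).toLinearMap := by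
  have h := LinearMap.det_conj (Tmap a ρ L k).toLinearMap (curryE (N := N)).symm
  rw [LinearEquiv.symm_symm] at h
  exact h

noncomputable def M0 : Matrix (Fin N × Fin 3) (Fin N × Fin 3) ℝ :=
  LinearMap.toMatrix' (Smap a ρ L k)

lemma det_M0 : (M0 a ρ L k).det = LinearMap.det (Tmap a ρ L k).toLinearMap := by
  rw [M0, LinearMap.det_toMatrix', det_S]

/-- basis vector -/
def sgl (j : Fin N) (l : Fin 3) : E N := fun t w => if (t, w) = (j, l) then 1 else 0

lemma sgl_apply (j : Fin N) (l : Fin 3) (t : Fin N) (w : Fin 3) :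
    sgl j l t w = if t = j ∧ w = l then 1 else 0 := by
  simp [sgl, Prod.ext_iff]

lemma M0_apply (i j : Fin N) (m l : Fin 3) :
    M0 a ρ L k (i, m) (j, l) = Tmap a ρ L k (sgl j l) i m := by
  rw [M0, LinearMap.toMatrix'_apply]
  have hs : (curryE (Pi.single (j, l) (1 : ℝ)) : E N) = sgl j l := by
    funext t w
    show (Pi.single (j, l) (1 : ℝ) : (Fin N × Fin 3) → ℝ) (t, w) = _
    simp [sgl, Pi.single_apply]
  show Tmap a ρ L k (curryE (Pi.single (j, l) (1 : ℝ))) i m = _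
  rw [hs]

lemma Tmap_apply (q : E N) (i : Fin N) (m : Fin 3) :
    Tmap a ρ L k q i m = ![ev i 1 q, g1 a ρ L k i q, g2 a ρ L k i q] m := by
  simp only [Tmap, ContinuousLinearMap.pi_apply]
  fin_cases m <;> rfl

lemma sum_sgl (i j : Fin N) (m l : Fin 3) :
    (∑ t, L i t * sgl j l t m) = if m = l then L i j else 0 := by
  by_cases hm : m = l
  · subst hm
    simp [sgl_apply, Finset.sum_ite_eq', mul_ite]
  · simp [sgl_apply, hm]

lemma g1_sgl (i j : Fin N) (l : Fin 3) :
    g1 a ρ L k i (sgl j l) =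
      (if i = j ∧ (0 : Fin 3) = l then 1 else 0) +
      a * (if i = j ∧ (1 : Fin 3) = l then 1 else 0) +
      (if k = 1 ∧ (1 : Fin 3) = l then ρ * L i j else 0) := by
  simp only [g1, ContinuousLinearMap.add_apply, ContinuousLinearMap.smul_apply, smul_eq_mul,
    ev_apply, cpl_apply, sgl_apply, sum_sgl]
  congr 1
  by_cases hk : k = 1 <;> by_cases hl : (1 : Fin 3) = l <;> simp [hk, hl]

lemma g1_sgl2 (i j : Fin N) : g1 a ρ L k i (sgl j 2) = 0 := by
  rw [g1_sgl]
  simp [(by decide : (0 : Fin 3) ≠ 2), (by decide : (1 : Fin 3) ≠ 2)]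

lemma g2_sgl2 (i j : Fin N) :
    g2 a ρ L k i (sgl j 2) = if i = j then -1 else 0 := by
  simp only [g2, ContinuousLinearMap.add_apply, ContinuousLinearMap.smul_apply, smul_eq_mul,
    apply_ite (fun (f : E N →L[ℝ] ℝ) => f (sgl j 2)), ContinuousLinearMap.zero_apply,
    ContinuousLinearMap.sum_apply, g1_sgl2, g0, ContinuousLinearMap.sub_apply,
    ContinuousLinearMap.neg_apply, ev_apply, cpl_apply, sum_sgl, sgl_apply]
  norm_num
  by_cases hi : i = j <;> simp [hi]

def sw : Equiv.Perm (Fin N × Fin 3) :=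
  Equiv.prodCongr (Equiv.refl (Fin N)) (Equiv.swap 0 1)

noncomputable def M1 : Matrix (Fin N × Fin 3) (Fin N × Fin 3) ℝ :=
  (M0 a ρ L k).submatrix id (sw (N := N))

lemma M1_apply (i j : Fin N) (m l : Fin 3) :
    M1 a ρ L k (i, m) (j, l) = M0 a ρ L k (i, m) (j, Equiv.swap 0 1 l) := rfl

lemma tri : ((M1 a ρ L k).transpose).BlockTriangular Prod.snd := by
  rintro ⟨j, l'⟩ ⟨i, m⟩ h
  change m < l' at h
  show M1 a ρ L k (i, m) (j, l') = 0
  rw [M1_apply, M0_apply, Tmap_apply]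
  fin_cases m <;> fin_cases l'
  · exact absurd h (by decide)
  · show sgl j 0 i 1 = 0
    simp [sgl_apply, (by decide : (1 : Fin 3) ≠ 0)]
  · show sgl j 2 i 1 = 0
    simp [sgl_apply, (by decide : (1 : Fin 3) ≠ 2)]
  · exact absurd h (by decide)
  · exact absurd h (by decide)
  · show g1 a ρ L k i (sgl j 2) = 0
    exact g1_sgl2 a ρ L k i j
  · exact absurd h (by decide)
  · exact absurd h (by decide)
  · exact absurd h (by decide)

lemma block0 : ((M1 a ρ L k).transpose).toSquareBlock Prod.snd 0 = 1 := by
  ext ⟨⟨j, l⟩, hl⟩ ⟨⟨i, m⟩, hm⟩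
  change l = 0 at hl
  change m = 0 at hm
  subst hl; subst hm
  show M1 a ρ L k (i, 0) (j, 0) = _
  rw [M1_apply, M0_apply, Tmap_apply]
  show ev i 1 (sgl j (Equiv.swap 0 1 0)) = _
  rw [Equiv.swap_apply_left]
  rw [ev_apply, sgl_apply, Matrix.one_apply]
  simp only [Subtype.mk.injEq, Prod.mk.injEq, and_true]
  by_cases hij : i = j
  · subst hij; simp
  · simp [hij, Ne.symm hij]

lemma block1 : ((M1 a ρ L k).transpose).toSquareBlock Prod.snd 1 = 1 := by
  ext ⟨⟨j, l⟩, hl⟩ ⟨⟨i, m⟩, hm⟩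
  change l = 1 at hl
  change m = 1 at hm
  subst hl; subst hm
  show M1 a ρ L k (i, 1) (j, 1) = _
  rw [M1_apply, M0_apply, Tmap_apply]
  show g1 a ρ L k i (sgl j (Equiv.swap 0 1 1)) = _
  rw [Equiv.swap_apply_right, g1_sgl, Matrix.one_apply]
  simp only [Subtype.mk.injEq, Prod.mk.injEq, and_true,
    (by decide : (1 : Fin 3) ≠ 0), (by decide : (0 : Fin 3) = 0)]
  by_cases hij : i = j
  · subst hij; simp
  · simp [hij, Ne.symm hij]

lemma block2 : ((M1 a ρ L k).transpose).toSquareBlock Prod.snd 2 = -1 := by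
  ext ⟨⟨j, l⟩, hl⟩ ⟨⟨i, m⟩, hm⟩
  change l = 2 at hl
  change m = 2 at hm
  subst hl; subst hm
  show M1 a ρ L k (i, 2) (j, 2) = _
  rw [M1_apply, M0_apply, Tmap_apply]
  show g2 a ρ L k i (sgl j (Equiv.swap 0 1 2)) = _
  have h2 : Equiv.swap (0 : Fin 3) 1 2 = 2 := by decide
  rw [h2, g2_sgl2, Matrix.neg_apply, Matrix.one_apply]
  simp only [Subtype.mk.injEq, Prod.mk.injEq, and_true]
  by_cases hij : i = j
  · subst hij; simp
  · simp [hij, Ne.symm hij]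

lemma abs_det_M0 : |(M0 a ρ L k).det| = 1 := by
  have hperm := Matrix.det_permute' (sw (N := N)) (M0 a ρ L k)
  have h1 : (M1 a ρ L k).det = ((Equiv.Perm.sign (sw (N := N)) : ℤ) : ℝ) * (M0 a ρ L k).det :=
    hperm
  have htri := (tri a ρ L k).det_fintype
  have habs1 : |(M1 a ρ L k).det| = 1 := by
    rw [← Matrix.det_transpose, htri, Fin.prod_univ_three, block0, block1, block2]
    rw [Matrix.det_one]
    have : ((-1 : Matrix { a : Fin N × Fin 3 // a.2 = 2 } _ ℝ)).det =
        (-1 : ℝ) ^ Fintype.card { a : Fin N × Fin 3 // a.2 = 2 } := by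
      rw [show (-1 : Matrix { a : Fin N × Fin 3 // a.2 = 2 } _ ℝ) = -(1 : Matrix _ _ ℝ) from rfl,
        Matrix.det_neg, Matrix.det_one, mul_one]
    rw [this]
    rw [abs_mul, abs_mul, abs_one, abs_pow, abs_neg, abs_one, one_pow]
    norm_num
  rw [h1, abs_mul, abs_unit_intCast, one_mul] at habs1
  exact habs1

lemma abs_det_T : |LinearMap.det (Tmap a ρ L k).toLinearMap| = 1 := by
  rw [← det_M0]
  exact abs_det_M0 a ρ L k

end NetObs

/-- For any network of `N ≥ 1` Rössler systems coupled through the `k`-th variable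
into the `k`-th equation according to an arbitrary matrix `L` with strength `ρ`, the
observability map `Φ` measuring `y` at every node is linear, the absolute value of its
(observability) determinant equals `1`, and `Φ` is a bijection of `ℝ^{3N}`: the network
is fully observable from measuring `y` at each node, independently of the coupling
topology `L`, the coupling strength `ρ`, and the choice of coupled variable `k`. -/
theorem network_obs_y {N : ℕ} (hN : 1 ≤ N) (a b c ρ : ℝ)
    (L : Matrix (Fin N) (Fin N) ℝ) (k : Fin 3) :
    IsLinearMap ℝ (PhiNet a b c ρ L k) ∧
    (∀ p : Fin N → Fin 3 → ℝ, |obsDet (PhiNet a b c ρ L k) p| = 1) ∧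
    Function.Bijective (PhiNet a b c ρ L k) := by
  have hphi := NetObs.phi_eq a ρ L k b c
  have habs := NetObs.abs_det_T a ρ L k
  refine ⟨?_, ?_, ?_⟩
  · rw [hphi]
    exact ⟨fun x y => map_add _ x y, fun cc x => map_smul _ cc x⟩
  · intro p
    rw [obsDet, hphi, ContinuousLinearMap.fderiv]
    exact habs
  · rw [hphi]
    have hne : LinearMap.det (NetObs.Tmap a ρ L k).toLinearMap ≠ 0 := by
      intro h0
      rw [h0] at habs
      norm_num at habs
    have hcoe : ⇑(LinearMap.equivOfDetNeZero (NetObs.Tmap a ρ L k).toLinearMap hne)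
        = ⇑(NetObs.Tmap a ρ L k) := by
      have h := LinearEquiv.coe_ofIsUnitDet
        (f := (NetObs.Tmap a ρ L k).toLinearMap)
        (v := Module.finBasis ℝ (NetObs.E N)) (v' := Module.finBasis ℝ (NetObs.E N))
        (h := by rw [LinearMap.det_toMatrix]; exact isUnit_iff_ne_zero.2 hne)
      exact congrArg DFunLike.coe h
    rw [← hcoe]
    exact (LinearMap.equivOfDetNeZero (NetObs.Tmap a ρ L k).toLinearMap hne).bijective
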